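/- Let S be a nonempty finite set of positive integers. Then there exists ν₀ ≥ 0 such that for every n ≥ 1 whose 2-adic valuation is at least ν₀, the quadratic trace function Q_n(x) = Tr(∑_{i∈S} x^(2^i+1)) on GaloisField 2 n is not balanced. -/

import Mathlib

/-!
Write `Q(x + u) = Q(x) + Q(u) + Tr(x L(u))` with the `𝔽₂`-linear map
`L(u) = ∑_{i ∈ S} (u^{2^i} + u^{2^{-i}})`. Squaring the Walsh sum `W = ∑ₓ (-1)^{Q(x)}` and using
the orthogonality of additive characters gives `W² = 2ⁿ ∑_{L(u) = 0} (-1)^{Q(u)}`, and `Q` is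
balanced exactly when `W = 0`.

Let `I = max S` and `n = 2^{e+1} r` with `2I ≤ 2^e`. If `L(u) = 0`, then `u` is killed by both
`b(φ)`, where `φ` is the Frobenius and `b = ∑_{i ∈ S} (X^{I+i} + X^{I-i})` has degree `2I`, and by
`φⁿ - 1 = (φ^r - 1)^{2^{e+1}}`. So `u` is killed by `gcd(b, (X^r - 1)^{2^{e+1}})`, which has degree
at most `2^e` and hence divides `(X^r - 1)^{2^e} = X^{n/2} - 1`: every element of the radical lies
in the subfield of order `2^{n/2}`. There `Q(u)` is the absolute trace of an element of that
subfield, which is twice its relative trace, i.e. `0`. Hence `W² = 2ⁿ · #ker L > 0`.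
-/

open Polynomial Finset

/-- The quadratic trace function `Q_n(x) = Tr(∑_{i∈S} x^(2^i+1))` on `GaloisField 2 n`. -/
noncomputable def Qtr (S : Finset ℕ) (n : ℕ) (x : GaloisField 2 n) : ZMod 2 :=
  Algebra.trace (ZMod 2) (GaloisField 2 n) (∑ i ∈ S, x ^ (2 ^ i + 1))

/-- `g` is balanced if it takes the value `1` exactly `2^(n-1)` times. -/
noncomputable def BalancedG (n : ℕ) (g : GaloisField 2 n → ZMod 2) : Prop :=
  Nat.card {x : GaloisField 2 n // g x = 1} = 2 ^ (n - 1)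

namespace FiniteField
variable {K L : Type*} [Field K] [Fintype K] [Field L] [Finite L] [Algebra K L]

theorem trace_pow_card_pow (x : L) (k : ℕ) :
    Algebra.trace K L (x ^ Fintype.card K ^ k) = Algebra.trace K L x := by
  rw [← Algebra.trace_eq_of_algEquiv (frobeniusAlgEquivOfAlgebraic K L ^ k) x, AlgEquiv.coe_pow,
    coe_frobeniusAlgEquivOfAlgebraic_iterate]

theorem trace_eq_zero_of_pow_card_pow_half_eq_self [CharP L 2] {m : ℕ}
    (hm : Module.finrank K L = m + m) {y : L} (hy : y ^ Fintype.card K ^ m = y) :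
    Algebra.trace K L y = 0 := by
  apply FaithfulSMul.algebraMap_injective K L
  rw [algebraMap_trace_eq_sum_pow, hm, sum_range_add, map_zero, Nat.card_eq_fintype_card]
  simp_rw [pow_add, pow_mul, hy]
  exact CharTwo.add_self_eq_zero _

end FiniteField

theorem Polynomial.dvd_pow_of_dvd_pow_of_natDegree_le {k : Type*} [Field k] {c g : k[X]}
    {N : ℕ} (hc : c ≠ 0) (hg : g ∣ c ^ N) : ∀ {M : ℕ}, g.natDegree ≤ M → g ∣ c ^ M := by
  induction g using WfDvdMonoid.induction_on_irreducible with
  | zero => exact absurd (zero_dvd_iff.mp hg) (pow_ne_zero _ hc)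
  | unit u hu => exact fun _ => hu.dvd
  | mul g p hg0 hp ih =>
    intro M hM
    have hpc : p ∣ c := hp.prime.dvd_of_dvd_pow (dvd_of_mul_right_dvd hg)
    rw [natDegree_mul hp.ne_zero hg0] at hM
    have hp0 := hp.natDegree_pos
    obtain ⟨M, rfl⟩ : ∃ M', M = M' + 1 := ⟨M - 1, by omega⟩
    rw [pow_succ']
    exact mul_dvd_mul hpc (ih (dvd_of_mul_left_dvd hg) (by omega))

theorem Module.End.aeval_pow_apply_eq_zero_of_natDegree_le {k V : Type*} [Field k] [AddCommGroup V]
    [Module k V] (f : Module.End k V) {v : V} {b c : k[X]} {N M : ℕ} (hb : b ≠ 0)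
    (hc : c ≠ 0) (hbM : b.natDegree ≤ M) (hbv : aeval f b v = 0) (hcv : aeval f (c ^ N) v = 0) :
    aeval f (c ^ M) v = 0 := by
  classical
  set g := EuclideanDomain.gcd b (c ^ N)
  have hgv : aeval f g v = 0 := by
    rw [show g = _ from EuclideanDomain.gcd_eq_gcd_ab b (c ^ N), mul_comm b, mul_comm (c ^ N)]
    simp only [map_add, map_mul, LinearMap.add_apply, Module.End.mul_apply, hbv, hcv, map_zero,
      add_zero]
  have hgM : g.natDegree ≤ M :=
    (natDegree_le_of_dvd (EuclideanDomain.gcd_dvd_left _ _) hb).trans hbM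
  obtain ⟨t, ht⟩ := dvd_pow_of_dvd_pow_of_natDegree_le hc (EuclideanDomain.gcd_dvd_right _ _) hgM
  rw [ht, mul_comm, map_mul, Module.End.mul_apply, hgv, map_zero]

noncomputable def signChar : AddChar (ZMod 2) ℤ := AddChar.zmodChar 2 (ζ := -1) (by norm_num)

lemma signChar_apply (a : ZMod 2) : signChar a = if a = 1 then -1 else 1 := by
  fin_cases a <;> rfl

lemma signChar_mul_self (a : ZMod 2) : signChar a * signChar a = 1 := by
  fin_cases a <;> rfl

lemma sum_signChar_comp {α : Type*} [Fintype α] (g : α → ZMod 2) :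
    ∑ x, signChar (g x) = Fintype.card α - 2 * Nat.card {x // g x = 1} := by
  classical
  have := card_filter_add_card_filter_not (s := univ) (fun x => g x = 1)
  simp only [signChar_apply, sum_ite, sum_const, smul_neg, nsmul_eq_mul, mul_one,
    Nat.card_eq_fintype_card, Fintype.card_subtype, card_univ] at this ⊢
  push_cast [← this]
  ring

noncomputable def traceChar (L : Type*) [Field L] [Algebra (ZMod 2) L] : AddChar L ℤ :=
  signChar.compAddMonoidHom (Algebra.trace (ZMod 2) L).toAddMonoidHom

lemma traceChar_apply {L : Type*} [Field L] [Algebra (ZMod 2) L] (x : L) :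
    traceChar L x = signChar (Algebra.trace (ZMod 2) L x) := rfl

lemma traceChar_isPrimitive (L : Type*) [Field L] [Finite L] [Algebra (ZMod 2) L] :
    (traceChar L).IsPrimitive := by
  refine AddChar.IsPrimitive.of_ne_one fun h => ?_
  obtain ⟨y, hy⟩ := Algebra.trace_surjective (ZMod 2) L 1
  simpa [traceChar_apply, hy, signChar_apply] using DFunLike.congr_fun h y

theorem sq_sum_eq_card_mul_sum_radical {R : Type*} [CommRing R] [Fintype R] [DecidableEq R]
    {ψ : AddChar R ℤ} (hψ : ψ.IsPrimitive) {f : R → ℤ} (L : R → R) (hf : ∀ x, f x * f x = 1)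
    (hfL : ∀ x u, f (x + u) = f x * f u * ψ (x * L u)) :
    (∑ x, f x) ^ 2 = Fintype.card R * ∑ u with L u = 0, f u := by
  calc (∑ x, f x) ^ 2 = ∑ x, ∑ u, f x * f (x + u) := by
        rw [sq, sum_mul_sum]
        exact sum_congr rfl fun x _ =>
          (Equiv.sum_comp (Equiv.addLeft x) (fun y => f x * f y)).symm
    _ = ∑ u, f u * ∑ x, ψ (x * L u) := by
        rw [sum_comm]
        refine sum_congr rfl fun u _ => ?_
        rw [mul_sum]
        refine sum_congr rfl fun x _ => ?_
        rw [hfL, ← mul_assoc, ← mul_assoc, hf, one_mul]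
    _ = Fintype.card R * ∑ u with L u = 0, f u := by
        rw [mul_sum, sum_filter]
        refine sum_congr rfl fun u _ => ?_
        rw [AddChar.sum_mulShift _ hψ]
        split_ifs <;> ring

namespace GaloisField
variable {n : ℕ}

noncomputable instance : Fintype (GaloisField 2 n) := Fintype.ofFinite _

noncomputable instance : DecidableEq (GaloisField 2 n) := Classical.decEq _

theorem card_eq_two_pow (h : n ≠ 0) : Fintype.card (GaloisField 2 n) = 2 ^ n := by
  rw [Fintype.card_eq_nat_card, card 2 n h]

theorem pow_two_pow_self (h : n ≠ 0) (x : GaloisField 2 n) : x ^ 2 ^ n = x := by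
  rw [← card_eq_two_pow h, FiniteField.pow_card]

theorem pow_two_pow_add (h : n ≠ 0) (x : GaloisField 2 n) (k : ℕ) :
    x ^ 2 ^ (k + n) = x ^ 2 ^ k := by
  rw [pow_add, pow_mul, pow_two_pow_self h]

theorem trace_pow_two_pow (x : GaloisField 2 n) (k : ℕ) :
    Algebra.trace (ZMod 2) _ (x ^ 2 ^ k) = Algebra.trace (ZMod 2) _ x := by
  simpa only [ZMod.card] using FiniteField.trace_pow_card_pow (K := ZMod 2) x k

theorem trace_eq_zero_of_pow_two_pow_half_eq_self {m : ℕ} (hm : m ≠ 0) (hn : n = m + m)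
    {y : GaloisField 2 n} (hy : y ^ 2 ^ m = y) : Algebra.trace (ZMod 2) _ y = 0 :=
  FiniteField.trace_eq_zero_of_pow_card_pow_half_eq_self (by rw [finrank 2 (by omega), hn])
    (by rwa [ZMod.card])

noncomputable def frob (n : ℕ) : Module.End (ZMod 2) (GaloisField 2 n) :=
  (FiniteField.frobeniusAlgHom (ZMod 2) (GaloisField 2 n)).toLinearMap

theorem aeval_frob_X_pow (k : ℕ) (x : GaloisField 2 n) :
    aeval (frob n) (X ^ k : (ZMod 2)[X]) x = x ^ 2 ^ k := by
  rw [map_pow, aeval_X, Module.End.pow_apply, frob, AlgHom.coe_toLinearMap,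
    FiniteField.coe_frobeniusAlgHom, ZMod.card, pow_iterate]

theorem aeval_frob_X_pow_sub_one (k : ℕ) (x : GaloisField 2 n) :
    aeval (frob n) (X ^ k - 1 : (ZMod 2)[X]) x = x ^ 2 ^ k - x := by
  rw [map_sub, LinearMap.sub_apply, aeval_frob_X_pow, map_one, Module.End.one_apply]

end GaloisField

theorem le_of_two_mul_le_two_pow {I e r n : ℕ} (hIe : 2 * I ≤ 2 ^ e) (hr : r ≠ 0)
    (hn : n = 2 ^ (e + 1) * r) : I ≤ n := by
  have := Nat.one_le_iff_ne_zero.2 hr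
  rw [hn, pow_succ]
  nlinarith

/-- `u ^ 2 ^ (n - i)` stands for `u^{2^{-i}}`, which it is only for `i ≤ n`. -/
noncomputable def polarMap (S : Finset ℕ) (n : ℕ) (u : GaloisField 2 n) : GaloisField 2 n :=
  ∑ i ∈ S, (u ^ 2 ^ i + u ^ 2 ^ (n - i))

noncomputable def radicalPoly (S : Finset ℕ) (I : ℕ) : (ZMod 2)[X] :=
  ∑ i ∈ S, (X ^ (I + i) + X ^ (I - i))

section
variable {S : Finset ℕ} {n : ℕ}

theorem Qtr_add (hn : n ≠ 0) (hS : ∀ i ∈ S, i ≤ n) (x u : GaloisField 2 n) :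
    Qtr S n (x + u) = Qtr S n x + Qtr S n u
      + Algebra.trace (ZMod 2) _ (x * polarMap S n u) := by
  have hcross : ∀ i ∈ S, Algebra.trace (ZMod 2) _ (x ^ 2 ^ i * u)
      = Algebra.trace (ZMod 2) _ (x * u ^ 2 ^ (n - i)) := fun i hi => by
    rw [← GaloisField.trace_pow_two_pow _ (n - i), mul_pow, ← pow_mul, ← pow_add,
      Nat.add_sub_cancel' (hS i hi), GaloisField.pow_two_pow_self hn]
  have hexpand : ∀ i, (x + u) ^ (2 ^ i + 1)
      = x ^ (2 ^ i + 1) + u ^ (2 ^ i + 1) + (x ^ 2 ^ i * u + x * u ^ 2 ^ i) := fun i => by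
    rw [pow_succ, add_pow_char_pow]; ring
  simp only [Qtr, polarMap, hexpand, sum_add_distrib, map_add, mul_sum, mul_add, map_sum,
    sum_congr rfl hcross]
  ring

theorem radicalPoly_natDegree_le (S : Finset ℕ) {I : ℕ} (hSI : ∀ i ∈ S, i ≤ I) :
    (radicalPoly S I).natDegree ≤ 2 * I := by
  refine natDegree_sum_le_of_forall_le _ _ fun i hi => (natDegree_add_le _ _).trans ?_
  have := hSI i hi
  simp only [natDegree_X_pow]
  omega

theorem radicalPoly_ne_zero {I : ℕ} (hIS : I ∈ S) (hI : 0 < I) (hSI : ∀ i ∈ S, i ≤ I) :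
    radicalPoly S I ≠ 0 := by
  have hcoeff : ∀ i ∈ S,
      (X ^ (I + i) + X ^ (I - i) : (ZMod 2)[X]).coeff (2 * I) = if i = I then 1 else 0 := by
    intro i hi
    have := hSI i hi
    simp only [coeff_add, coeff_X_pow]
    split_ifs <;> first | omega | simp
  have h2I : (radicalPoly S I).coeff (2 * I) = 1 := by
    rw [radicalPoly, finsetSum_coeff, sum_congr rfl hcoeff, sum_ite_eq' S I, if_pos hIS]
  exact fun h0 => zero_ne_one (by rwa [h0, coeff_zero] at h2I)

theorem aeval_frob_radicalPoly (hn : n ≠ 0) {I : ℕ} (hIn : I ≤ n) (hSI : ∀ i ∈ S, i ≤ I)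
    (u : GaloisField 2 n) :
    aeval (GaloisField.frob n) (radicalPoly S I) u = polarMap S n u ^ 2 ^ I := by
  rw [radicalPoly, polarMap, sum_pow_char_pow, map_sum, LinearMap.sum_apply]
  refine sum_congr rfl fun i hi => ?_
  have := hSI i hi
  rw [add_pow_char_pow, ← pow_mul, ← pow_mul, ← pow_add, ← pow_add, map_add, LinearMap.add_apply,
    GaloisField.aeval_frob_X_pow, GaloisField.aeval_frob_X_pow, add_comm i,
    show n - i + I = I - i + n by omega, GaloisField.pow_two_pow_add hn]

theorem pow_two_pow_half_eq_self_of_polarMap_eq_zero {I e r : ℕ} (hIS : I ∈ S) (hI : 0 < I)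
    (hSI : ∀ i ∈ S, i ≤ I) (hIe : 2 * I ≤ 2 ^ e) (hr : r ≠ 0) (hn : n = 2 ^ (e + 1) * r)
    {u : GaloisField 2 n} (hu : polarMap S n u = 0) : u ^ 2 ^ (2 ^ e * r) = u := by
  have hn0 : n ≠ 0 := by rw [hn]; positivity
  have hIn : I ≤ n := le_of_two_mul_le_two_pow hIe hr hn
  have hc : (X ^ r - 1 : (ZMod 2)[X]) ≠ 0 := by
    simpa using X_pow_sub_C_ne_zero (Nat.pos_of_ne_zero hr) (1 : ZMod 2)
  have hpow : ∀ k, (X ^ r - 1 : (ZMod 2)[X]) ^ 2 ^ k = X ^ (2 ^ k * r) - 1 := fun k => by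
    rw [sub_pow_char_pow, one_pow, ← pow_mul, mul_comm]
  have hcv : aeval (GaloisField.frob n) ((X ^ r - 1 : (ZMod 2)[X]) ^ 2 ^ (e + 1)) u = 0 := by
    rw [hpow, ← hn, GaloisField.aeval_frob_X_pow_sub_one, GaloisField.pow_two_pow_self hn0,
      sub_self]
  have hbv : aeval (GaloisField.frob n) (radicalPoly S I) u = 0 := by
    rw [aeval_frob_radicalPoly hn0 hIn hSI, hu, zero_pow (by positivity)]
  have := (GaloisField.frob n).aeval_pow_apply_eq_zero_of_natDegree_le (radicalPoly_ne_zero hIS hI hSI) hc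
    ((radicalPoly_natDegree_le S hSI).trans hIe) hbv hcv
  rwa [hpow, GaloisField.aeval_frob_X_pow_sub_one, sub_eq_zero] at this

theorem Qtr_eq_zero_of_polarMap_eq_zero {I e r : ℕ} (hIS : I ∈ S) (hI : 0 < I)
    (hSI : ∀ i ∈ S, i ≤ I) (hIe : 2 * I ≤ 2 ^ e) (hr : r ≠ 0) (hn : n = 2 ^ (e + 1) * r)
    {u : GaloisField 2 n} (hu : polarMap S n u = 0) : Qtr S n u = 0 := by
  have hfix := pow_two_pow_half_eq_self_of_polarMap_eq_zero hIS hI hSI hIe hr hn hu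
  refine GaloisField.trace_eq_zero_of_pow_two_pow_half_eq_self (m := 2 ^ e * r) (by positivity)
    (by rw [hn]; ring) ?_
  rw [sum_pow_char_pow]
  exact sum_congr rfl fun i _ => by rw [pow_right_comm, hfix]

theorem sq_sum_signChar_Qtr (hn : n ≠ 0) (hS : ∀ i ∈ S, i ≤ n) :
    (∑ x, signChar (Qtr S n x)) ^ 2
      = 2 ^ n * ∑ u with polarMap S n u = 0, signChar (Qtr S n u) := by
  rw [sq_sum_eq_card_mul_sum_radical (traceChar_isPrimitive _) _ (fun x => signChar_mul_self _)
    fun x u => by rw [Qtr_add hn hS, AddChar.map_add_eq_mul, AddChar.map_add_eq_mul]; rfl,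
    GaloisField.card_eq_two_pow hn]
  push_cast
  rfl

theorem BalancedG.sum_signChar_eq_zero (hn : n ≠ 0) {g : GaloisField 2 n → ZMod 2}
    (h : BalancedG n g) : ∑ x, signChar (g x) = 0 := by
  rw [sum_signChar_comp, h, GaloisField.card_eq_two_pow hn]
  obtain ⟨m, rfl⟩ : ∃ m, n = m + 1 := ⟨n - 1, by omega⟩
  push_cast
  ring

theorem sum_signChar_Qtr_ne_zero {I e r : ℕ} (hIS : I ∈ S) (hI : 0 < I)
    (hSI : ∀ i ∈ S, i ≤ I) (hIe : 2 * I ≤ 2 ^ e) (hr : r ≠ 0) (hn : n = 2 ^ (e + 1) * r) :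
    ∑ x, signChar (Qtr S n x) ≠ 0 := by
  have hn0 : n ≠ 0 := by rw [hn]; positivity
  have hIn : I ≤ n := le_of_two_mul_le_two_pow hIe hr hn
  intro hW
  have hsq := sq_sum_signChar_Qtr hn0 fun i hi => (hSI i hi).trans hIn
  rw [hW, sum_congr rfl fun u hu => by
    rw [Qtr_eq_zero_of_polarMap_eq_zero hIS hI hSI hIe hr hn (mem_filter.1 hu).2,
      AddChar.map_zero_eq_one]] at hsq
  have hker : 0 < #{u : GaloisField 2 n | polarMap S n u = 0} :=
    card_pos.2 ⟨0, mem_filter.2 ⟨mem_univ _, sum_eq_zero fun i _ => by simp⟩⟩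
  rw [sum_const, nsmul_one, zero_pow two_ne_zero] at hsq
  exact (by positivity : (0 : ℤ) < _).ne hsq

end

/-- `Q_n` is unbalanced as soon as the 2-adic valuation of `n` is large enough. -/
theorem unbalanced_for_large_valuation (S : Finset ℕ) (hS : S.Nonempty)
    (hpos : ∀ i ∈ S, 1 ≤ i) :
    ∃ ν₀ : ℕ, ∀ n, 1 ≤ n → ν₀ ≤ padicValNat 2 n → ¬ BalancedG n (Qtr S n) := by
  set I := S.max' hS
  refine ⟨I + 2, fun n hn hν hbal => ?_⟩
  obtain ⟨r, hr⟩ : 2 ^ (I + 1 + 1) ∣ n := (pow_dvd_pow 2 hν).trans pow_padicValNat_dvd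
  have hIe : 2 * I ≤ 2 ^ (I + 1) := by rw [pow_succ]; have := I.lt_two_pow_self; omega
  exact sum_signChar_Qtr_ne_zero (S.max'_mem hS) (hpos I (S.max'_mem hS))
    (fun i hi => S.le_max' i hi) hIe (by rintro rfl; omega) hr
    (hbal.sum_signChar_eq_zero (by omega))
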